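/- Let N ≥ 1 be an integer, λ > 0, and n ∈ ℤ^N, and let f_n be the symmetric polynomial defined by the iterated contour integral. If there exists j ∈ {1,…,N−1} with n_j + n_{j+1} + ⋯ + n_N < 0, then f_n is identically zero. -/

import Mathlib

open MeasureTheory Set Complex intervalIntegral Finset

/-- Iterated contour integral: `N` nested circle integrals (each with a factor `1/(2πi)`),
the `j`-th variable running over the counterclockwise circle of radius `R j` centered at `0`. -/
noncomputable def iterCircle : (N : ℕ) → (Fin N → ℝ) → ((Fin N → ℂ) → ℂ) → ℂ
  | 0, _, f => f (fun i => i.elim0)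
  | N+1, R, f => (2 * Real.pi * Complex.I)⁻¹ *
      ∮ z in C(0, R 0), iterCircle N (fun j => R j.succ) (fun y => f (Fin.cons z y))

/-- The kernel `∏_{j<k} (1 − y_j/y_k)^λ · ∏_{j,k} (1 − x_j/y_k)^{−λ}` (principal branch powers). -/
noncomputable def kerA (N : ℕ) (lam : ℝ) (x : Fin N → ℝ) (y : Fin N → ℂ) : ℂ :=
  (∏ j, ∏ k, (if j < k then (1 - y j / y k) ^ (lam : ℂ) else 1)) *
  ∏ j, ∏ k, (1 - (x j : ℂ) / y k) ^ (-(lam : ℂ))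

/-- `f_n^{(ε)}(x)`: the iterated contour integral with radii `R_j = max_k |x_k| + ε·j`
applied to `(∏_j y_j^{n_j − 1})` times the kernel; its value is independent of `ε > 0`
and defines the symmetric polynomial `f_n`. -/
noncomputable def fval (N : ℕ) (lam : ℝ) (n : Fin N → ℤ) (ε : ℝ) (x : Fin N → ℝ) : ℂ :=
  iterCircle N (fun j => (⨆ k, |x k|) + ε * (j.val + 1))
    (fun y => (∏ j, y j ^ (n j - 1)) * kerA N lam x y)

noncomputable def Complex.abs : AbsoluteValue ℂ ℝ where
  toFun z := ‖z‖
  map_mul' := norm_mul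
  nonneg' := norm_nonneg
  eq_zero' _ := norm_eq_zero
  add_le' := norm_add_le

theorem Complex.abs_apply (z : ℂ) : Complex.abs z = ‖z‖ := rfl

theorem Complex.norm_eq_abs (z : ℂ) : ‖z‖ = Complex.abs z := rfl

theorem abs_circleMap_zero (R θ : ℝ) : Complex.abs (circleMap 0 R θ) = |R| :=
  norm_circleMap_zero R θ

theorem Complex.abs_ofReal (r : ℝ) : Complex.abs (r : ℂ) = |r| := Complex.norm_real r

theorem Complex.abs_cpow_real (x : ℂ) (y : ℝ) :
    Complex.abs (x ^ (y : ℂ)) = Complex.abs x ^ y := Complex.norm_cpow_real x y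

theorem Complex.abs_eq_one_iff (z : ℂ) : Complex.abs z = 1 ↔ ∃ θ : ℝ, Complex.exp (θ * Complex.I) = z := by
  constructor
  · intro h
    refine ⟨z.arg, ?_⟩
    have := Complex.norm_mul_exp_arg_mul_I z
    rw [show ‖z‖ = 1 from h, Complex.ofReal_one, one_mul] at this
    exact this
  · rintro ⟨θ, rfl⟩
    exact Complex.norm_exp_ofReal_mul_I θ

namespace Stmt4Aux


lemma iterCircle_congr : ∀ (N : ℕ) (R : Fin N → ℝ) (f g : (Fin N → ℂ) → ℂ),
    (∀ k, 0 ≤ R k) →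
    (∀ y : Fin N → ℂ, (∀ k, Complex.abs (y k) = R k) → f y = g y) →
    iterCircle N R f = iterCircle N R g
  | 0, R, f, g, _, h => h _ (fun k => k.elim0)
  | (N+1), R, f, g, hR, h => by
    simp only [iterCircle]
    congr 1
    simp only [circleIntegral]
    refine intervalIntegral.integral_congr fun θ _ => ?_
    congr 1
    refine iterCircle_congr N _ _ _ (fun k => hR k.succ) (fun y hy => h _ ?_)
    intro k
    refine Fin.cases ?_ (fun i => ?_) k
    · simpa [abs_circleMap_zero] using _root_.abs_of_nonneg (hR 0)
    · simpa [Fin.cons_succ] using hy i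

lemma iterCircle_const_mul : ∀ (N : ℕ) (R : Fin N → ℝ) (a : ℂ) (f : (Fin N → ℂ) → ℂ),
    iterCircle N R (fun y => a * f y) = a * iterCircle N R f
  | 0, R, a, f => rfl
  | (N+1), R, a, f => by
    simp only [iterCircle]
    have : (fun z => iterCircle N (fun j => R j.succ) (fun y => a * f (Fin.cons z y)))
        = fun z => a * iterCircle N (fun j => R j.succ) (fun y => f (Fin.cons z y)) := by
      funext z; exact iterCircle_const_mul N _ a _
    rw [this, circleIntegral.integral_const_mul]
    ring

lemma iterCircle_zero : ∀ (N : ℕ) (R : Fin N → ℝ), iterCircle N R (fun _ => 0) = 0 := by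
  intro N R
  have := iterCircle_const_mul N R 0 (fun _ => (0:ℂ))
  simpa using this



lemma cons_circleMap {N : ℕ} (R : Fin (N+1) → ℝ) (a : ℝ) (b : Fin N → ℝ) :
    Fin.cons (circleMap 0 (R 0) a) (fun k => circleMap 0 (R k.succ) (b k))
      = fun k => circleMap 0 (R k) ((Fin.cons a b : Fin (N+1) → ℝ) k) := by
  funext k
  refine Fin.cases rfl (fun i => ?_) k
  simp [Fin.cons_succ]

lemma cont_param {X : Type*} [TopologicalSpace X] [LocallyCompactSpace X]
    [FirstCountableTopology X]
    {H : X × ℝ → ℂ} (hH : Continuous H) (a b : ℝ) :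
    Continuous fun x => ∫ θ in a..b, H (x, θ) := by
  rw [continuous_iff_continuousAt]
  intro x₀
  obtain ⟨K, hK, hKmem⟩ := exists_compact_mem_nhds x₀
  obtain ⟨C, hC⟩ := (hK.prod (isCompact_uIcc (a := a) (b := b))).exists_bound_of_continuousOn
    hH.continuousOn
  refine intervalIntegral.continuousAt_of_dominated_interval (bound := fun _ => C)
      (Filter.Eventually.of_forall fun x =>
        (hH.comp (Continuous.prodMk_right x)).aestronglyMeasurable)
      ?_ intervalIntegrable_const
      (Filter.Eventually.of_forall fun θ _ =>
        (hH.comp (continuous_id.prodMk continuous_const)).continuousAt)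
  · filter_upwards [hKmem] with x hx
    refine Filter.Eventually.of_forall fun θ hθ => ?_
    exact hC (x, θ) ⟨hx, Set.uIoc_subset_uIcc hθ⟩

lemma interval_swap {H : ℝ × ℝ → ℂ} (hH : Continuous H) {a b : ℝ} (hab : a ≤ b) :
    ∫ s in a..b, ∫ t in a..b, H (s, t) = ∫ t in a..b, ∫ s in a..b, H (s, t) := by
  simp only [intervalIntegral.integral_of_le hab]
  refine MeasureTheory.integral_integral_swap ?_
  have h1 : IntegrableOn H (Set.Ioc a b ×ˢ Set.Ioc a b) volume := by
    refine IntegrableOn.mono_set ?_ (Set.prod_mono Set.Ioc_subset_Icc_self Set.Ioc_subset_Icc_self)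
    exact hH.continuousOn.integrableOn_compact (isCompact_Icc.prod isCompact_Icc)
  have : Integrable H (((volume : Measure ℝ).restrict (Set.Ioc a b)).prod
      ((volume : Measure ℝ).restrict (Set.Ioc a b))) := by
    rw [Measure.prod_restrict]
    rwa [← Measure.volume_eq_prod] at *
  exact this

lemma iterCircle_cont {X : Type*} [TopologicalSpace X] [LocallyCompactSpace X]
    [FirstCountableTopology X] :
    ∀ (N : ℕ) (R : Fin N → ℝ) (f : X → (Fin N → ℂ) → ℂ),
    Continuous (fun p : X × (Fin N → ℝ) => f p.1 (fun k => circleMap 0 (R k) (p.2 k))) →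
    Continuous fun x => iterCircle N R (f x)
  | 0, R, f, hf => by
    have h : (fun x => iterCircle 0 R (f x)) =
        (fun p : X × (Fin 0 → ℝ) => f p.1 (fun k => circleMap 0 (R k) (p.2 k))) ∘
          (fun x => (x, fun i => i.elim0)) := by
      funext x
      simp only [iterCircle, Function.comp_apply]
      congr 1
      funext i
      exact i.elim0
    rw [h]
    exact hf.comp (continuous_id.prodMk continuous_const)
  | (N+1), R, f, hf => by
    have hG : Continuous (fun q : X × ℝ => iterCircle N (fun j => R j.succ)
        (fun y => f q.1 (Fin.cons (circleMap 0 (R 0) q.2) y))) := by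
      refine iterCircle_cont N (fun j => R j.succ)
        (fun (q : X × ℝ) y => f q.1 (Fin.cons (circleMap 0 (R 0) q.2) y)) ?_
      have h : (fun p : (X × ℝ) × (Fin N → ℝ) =>
          f p.1.1 (Fin.cons (circleMap 0 (R 0) p.1.2)
            (fun k => circleMap 0 (R k.succ) (p.2 k))))
          = (fun p : X × (Fin (N+1) → ℝ) => f p.1 (fun k => circleMap 0 (R k) (p.2 k))) ∘
            (fun p => (p.1.1, Fin.cons p.1.2 p.2)) := by
        funext p
        simp only [Function.comp_apply]
        congr 1
        exact cons_circleMap R p.1.2 p.2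
      rw [h]
      refine hf.comp ?_
      refine (continuous_fst.comp continuous_fst).prodMk (continuous_pi fun k => ?_)
      refine Fin.cases ?_ (fun i => ?_) k
      · simp only [Fin.cons_zero]
        exact continuous_snd.comp continuous_fst
      · simp only [Fin.cons_succ]
        exact (continuous_apply i).comp continuous_snd
    have hH : Continuous fun q : X × ℝ => deriv (circleMap 0 (R 0)) q.2 •
        iterCircle N (fun j => R j.succ) (fun y => f q.1 (Fin.cons (circleMap 0 (R 0) q.2) y)) := by
      simp only [deriv_circleMap]
      exact (((continuous_circleMap 0 (R 0)).comp continuous_snd).mul continuous_const).smul hG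
    simp only [iterCircle, circleIntegral]
    exact continuous_const.mul (cont_param hH 0 (2 * Real.pi))

lemma iterCircle_swap :
    ∀ (N : ℕ) (R : Fin N → ℝ) (f : ℝ → (Fin N → ℂ) → ℂ),
    Continuous (fun p : ℝ × (Fin N → ℝ) => f p.1 (fun k => circleMap 0 (R k) (p.2 k))) →
    ∫ φ in (0:ℝ)..(2*Real.pi), iterCircle N R (f φ)
      = iterCircle N R (fun y => ∫ φ in (0:ℝ)..(2*Real.pi), f φ y)
  | 0, R, f, hf => by simp only [iterCircle]
  | (N+1), R, f, hf => by
    have h2π : (0:ℝ) ≤ 2 * Real.pi := by positivity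
    have hG : Continuous (fun q : ℝ × ℝ => iterCircle N (fun j => R j.succ)
        (fun y => f q.1 (Fin.cons (circleMap 0 (R 0) q.2) y))) := by
      refine iterCircle_cont N (fun j => R j.succ)
        (fun (q : ℝ × ℝ) y => f q.1 (Fin.cons (circleMap 0 (R 0) q.2) y)) ?_
      have h : (fun p : (ℝ × ℝ) × (Fin N → ℝ) =>
          f p.1.1 (Fin.cons (circleMap 0 (R 0) p.1.2)
            (fun k => circleMap 0 (R k.succ) (p.2 k))))
          = (fun p : ℝ × (Fin (N+1) → ℝ) => f p.1 (fun k => circleMap 0 (R k) (p.2 k))) ∘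
            (fun p => (p.1.1, Fin.cons p.1.2 p.2)) := by
        funext p
        simp only [Function.comp_apply]
        congr 1
        exact cons_circleMap R p.1.2 p.2
      rw [h]
      refine hf.comp ?_
      refine (continuous_fst.comp continuous_fst).prodMk (continuous_pi fun k => ?_)
      refine Fin.cases ?_ (fun i => ?_) k
      · simp only [Fin.cons_zero]
        exact continuous_snd.comp continuous_fst
      · simp only [Fin.cons_succ]
        exact (continuous_apply i).comp continuous_snd
    have hH : Continuous fun q : ℝ × ℝ => deriv (circleMap 0 (R 0)) q.2 •
        iterCircle N (fun j => R j.succ)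
          (fun y => f q.1 (Fin.cons (circleMap 0 (R 0) q.2) y)) := by
      simp only [deriv_circleMap]
      exact (((continuous_circleMap 0 (R 0)).comp continuous_snd).mul continuous_const).smul hG
    simp only [iterCircle, circleIntegral]
    rw [intervalIntegral.integral_const_mul]
    congr 1
    rw [interval_swap hH h2π]
    refine intervalIntegral.integral_congr fun θ _ => ?_
    show (∫ s in (0:ℝ)..(2*Real.pi), deriv (circleMap 0 (R 0)) θ •
        iterCircle N (fun j => R j.succ)
          (fun y => f s (Fin.cons (circleMap 0 (R 0) θ) y))) = _
    rw [intervalIntegral.integral_smul]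
    congr 1
    refine iterCircle_swap N (fun j => R j.succ)
      (fun φ y => f φ (Fin.cons (circleMap 0 (R 0) θ) y)) ?_
    have h : (fun p : ℝ × (Fin N → ℝ) =>
        f p.1 (Fin.cons (circleMap 0 (R 0) θ) (fun k => circleMap 0 (R k.succ) (p.2 k))))
        = (fun p : ℝ × (Fin (N+1) → ℝ) => f p.1 (fun k => circleMap 0 (R k) (p.2 k))) ∘
          (fun p => (p.1, Fin.cons θ p.2)) := by
      funext p
      simp only [Function.comp_apply]
      congr 1
      exact cons_circleMap R θ p.2
    rw [h]
    refine hf.comp (continuous_fst.prodMk (continuous_pi fun k => ?_))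
    refine Fin.cases ?_ (fun i => ?_) k
    · simp only [Fin.cons_zero]
      exact continuous_const
    · simp only [Fin.cons_succ]
      exact (continuous_apply i).comp continuous_snd



lemma circle_rot (R : ℝ) (c : ℂ) (hc : Complex.abs c = 1) (g : ℂ → ℂ) :
    (∮ z in C(0, R), g z) = c * ∮ z in C(0, R), g (c * z) := by
  obtain ⟨φ, hφ⟩ := (Complex.abs_eq_one_iff c).mp hc
  have hcm : ∀ θ : ℝ, circleMap 0 R (θ + φ) = c * circleMap 0 R θ := by
    intro θ
    simp only [circleMap, zero_add]
    rw [Complex.ofReal_add, add_mul, Complex.exp_add, ← hφ]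
    ring
  have hper : Function.Periodic
      (fun θ => deriv (circleMap 0 R) θ • g (circleMap 0 R θ)) (2 * Real.pi) := by
    intro θ
    simp [deriv_circleMap, periodic_circleMap 0 R θ]
  calc (∮ z in C(0, R), g z)
      = ∫ θ in (0:ℝ)..2*Real.pi, deriv (circleMap 0 R) θ • g (circleMap 0 R θ) := rfl
    _ = ∫ θ in φ..(φ + 2*Real.pi), deriv (circleMap 0 R) θ • g (circleMap 0 R θ) := by
        have h := hper.intervalIntegral_add_eq 0 φ
        rw [zero_add] at h
        exact h
    _ = ∫ θ in (0:ℝ)..2*Real.pi, deriv (circleMap 0 R) (θ + φ) • g (circleMap 0 R (θ + φ)) := by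
        rw [intervalIntegral.integral_comp_add_right
          (fun θ => deriv (circleMap 0 R) θ • g (circleMap 0 R θ)) φ]
        rw [zero_add, add_comm]
    _ = c * ∫ θ in (0:ℝ)..2*Real.pi, deriv (circleMap 0 R) θ • g (c * circleMap 0 R θ) := by
        rw [← intervalIntegral.integral_const_mul]
        refine intervalIntegral.integral_congr fun θ _ => ?_
        simp only [deriv_circleMap, hcm θ, smul_eq_mul]
        ring
    _ = c * ∮ z in C(0, R), g (c * z) := rfl

lemma iterCircle_rot : ∀ (N : ℕ) (R : Fin N → ℝ) (c : Fin N → ℂ),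
    (∀ k, Complex.abs (c k) = 1) → ∀ (f : (Fin N → ℂ) → ℂ),
    iterCircle N R f = (∏ k, c k) * iterCircle N R (fun y => f (fun k => c k * y k))
  | 0, R, c, hc, f => by
    simp only [iterCircle, Finset.univ_eq_empty, Finset.prod_empty, one_mul]
    congr 1
    funext i
    exact i.elim0
  | (N+1), R, c, hc, f => by
    simp only [iterCircle]
    rw [circle_rot (R 0) (c 0) (hc 0)]
    have h1 : (fun z => iterCircle N (fun j => R j.succ) (fun y => f (Fin.cons (c 0 * z) y)))
        = fun z => (∏ i : Fin N, c i.succ) * iterCircle N (fun j => R j.succ)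
            (fun y => f (fun k => c k * (Fin.cons z y : Fin (N+1) → ℂ) k)) := by
      funext z
      rw [iterCircle_rot N (fun j => R j.succ) (fun i => c i.succ) (fun i => hc i.succ)
        (fun y => f (Fin.cons (c 0 * z) y))]
      congr 1
      refine congrArg (iterCircle N (fun j => R j.succ))
        (funext fun y => congrArg f (funext fun k => ?_))
      refine Fin.cases rfl (fun i => ?_) k
      simp [Fin.cons_succ]
    rw [h1, circleIntegral.integral_const_mul, Fin.prod_univ_succ]
    ring


noncomputable def FB (N : ℕ) (lam : ℝ) (x : Fin N → ℝ) (n : Fin N → ℤ) (j : Fin N)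
    (t : ℂ) (y : Fin N → ℂ) : ℂ :=
  (∏ k, (if j ≤ k then t else 1)) *
    ((∏ k, ((if j ≤ k then t else 1) * y k) ^ (n k - 1)) *
      kerA N lam x (fun k => (if j ≤ k then t else 1) * y k))

lemma re_pos_of_abs_lt_one {u : ℂ} (h : Complex.abs u < 1) : 0 < (1 - u).re := by
  have h1 : u.re ≤ Complex.abs u := Complex.re_le_norm u
  simp only [Complex.sub_re, Complex.one_re]
  linarith

lemma prod_zpow_sum {α : Type*} (s : Finset α) (r : ℝ) (hr : r ≠ 0) (g : α → ℤ) :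
    ∏ a ∈ s, r ^ g a = r ^ (∑ a ∈ s, g a) := by
  classical
  induction s using Finset.induction with
  | empty => simp
  | insert _ _ h ih => rw [Finset.prod_insert h, Finset.sum_insert h, ih, zpow_add₀ hr]

lemma cont_cpow_of_re_pos {α : Type*} [TopologicalSpace α] {f : α → ℂ} (hf : Continuous f)
    (h : ∀ p, 0 < (f p).re) (w : ℂ) : Continuous fun p => f p ^ w :=
  continuous_iff_continuousAt.2 fun p => (hf.continuousAt).cpow continuousAt_const (Or.inl (h p))

section Core

variable {N : ℕ} (lam : ℝ) (x : Fin N → ℝ) (n : Fin N → ℤ) (j : Fin N)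
  (R : Fin N → ℝ) (M δ : ℝ)

lemma cont_FB (hlam : 0 < lam) (hM0 : 0 ≤ M) (hMx : ∀ k, |x k| ≤ M)
    (hRpos : ∀ k, 0 < R k) (hRlt : ∀ a b : Fin N, a < b → R a < R b)
    (hδ : 0 < δ) (hδR : ∀ b, M ≤ (1 - δ) * R b) :
    Continuous fun p : ℝ × (Fin N → ℝ) =>
      FB N lam x n j (circleMap 0 1 p.1) (fun k => circleMap 0 (R k) (p.2 k)) := by
  classical
  have habs_t : ∀ p : ℝ × (Fin N → ℝ), Complex.abs (circleMap 0 1 p.1) = 1 := by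
    intro p; rw [abs_circleMap_zero]; norm_num
  have habs_y : ∀ (p : ℝ × (Fin N → ℝ)) (k : Fin N),
      Complex.abs (circleMap 0 (R k) (p.2 k)) = R k := by
    intro p k; rw [abs_circleMap_zero]; exact _root_.abs_of_pos (hRpos k)
  have habs_cc : ∀ (p : ℝ × (Fin N → ℝ)) (k : Fin N),
      Complex.abs (if j ≤ k then circleMap 0 1 p.1 else 1) = 1 := by
    intro p k
    split
    · exact habs_t p
    · simp
  have hne_cc : ∀ (p : ℝ × (Fin N → ℝ)) (k : Fin N),
      (if j ≤ k then circleMap 0 1 p.1 else 1) ≠ 0 := by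
    intro p k h0
    have := habs_cc p k
    rw [h0] at this
    simp at this
  have hne_y : ∀ (p : ℝ × (Fin N → ℝ)) (k : Fin N), circleMap 0 (R k) (p.2 k) ≠ 0 := by
    intro p k h0
    have := habs_y p k
    rw [h0] at this
    simp only [map_zero] at this
    exact absurd this.symm (ne_of_gt (hRpos k))
  have hu : ∀ (p : ℝ × (Fin N → ℝ)) (a b : Fin N), a < b →
      Complex.abs (((if j ≤ a then circleMap 0 1 p.1 else 1) * circleMap 0 (R a) (p.2 a)) /
        ((if j ≤ b then circleMap 0 1 p.1 else 1) * circleMap 0 (R b) (p.2 b))) < 1 := by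
    intro p a b hab
    rw [map_div₀, map_mul, map_mul, habs_cc, habs_cc, habs_y, habs_y, one_mul, one_mul]
    rw [div_lt_one (hRpos b)]
    exact hRlt a b hab
  have hw : ∀ (p : ℝ × (Fin N → ℝ)) (a b : Fin N),
      Complex.abs ((x a : ℂ) /
        ((if j ≤ b then circleMap 0 1 p.1 else 1) * circleMap 0 (R b) (p.2 b))) < 1 := by
    intro p a b
    rw [map_div₀, map_mul, habs_cc, habs_y, one_mul, Complex.abs_ofReal]
    rw [div_lt_one (hRpos b)]
    have h1 : M ≤ (1 - δ) * R b := hδR b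
    have h2 : (1 - δ) * R b < R b := by nlinarith [hRpos b]
    calc |x a| ≤ M := hMx a
      _ < R b := lt_of_le_of_lt h1 h2
  have hct : Continuous fun p : ℝ × (Fin N → ℝ) => circleMap 0 1 p.1 :=
    (continuous_circleMap 0 1).comp continuous_fst
  have hcy : ∀ k : Fin N, Continuous fun p : ℝ × (Fin N → ℝ) => circleMap 0 (R k) (p.2 k) :=
    fun k => (continuous_circleMap 0 (R k)).comp ((continuous_apply k).comp continuous_snd)
  have hcck : ∀ k : Fin N, Continuous fun p : ℝ × (Fin N → ℝ) =>
      (if j ≤ k then circleMap 0 1 p.1 else 1 : ℂ) := by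
    intro k
    by_cases h : j ≤ k
    · simpa [h] using hct
    · simp only [if_neg h]
      exact continuous_const
  simp only [FB, kerA]
  refine Continuous.mul ?_ (Continuous.mul ?_ ?_)
  · exact continuous_finset_prod _ fun k _ => hcck k
  · refine continuous_finset_prod _ fun k _ => ?_
    exact ((hcck k).mul (hcy k)).zpow₀ _
      (fun p => Or.inl (mul_ne_zero (hne_cc p k) (hne_y p k)))
  · refine Continuous.mul ?_ ?_
    · refine continuous_finset_prod _ fun a _ => continuous_finset_prod _ fun b _ => ?_
      by_cases hab : a < b
      · simp only [if_pos hab]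
        refine cont_cpow_of_re_pos ?_ (fun p => re_pos_of_abs_lt_one (hu p a b hab)) _
        exact continuous_const.sub (Continuous.div ((hcck a).mul (hcy a))
          ((hcck b).mul (hcy b)) (fun p => mul_ne_zero (hne_cc p b) (hne_y p b)))
      · simp only [if_neg hab]
        exact continuous_const
    · refine continuous_finset_prod _ fun a _ => continuous_finset_prod _ fun b _ => ?_
      refine cont_cpow_of_re_pos ?_ (fun p => re_pos_of_abs_lt_one (hw p a b)) _
      exact continuous_const.sub (Continuous.div continuous_const
        ((hcck b).mul (hcy b)) (fun p => mul_ne_zero (hne_cc p b) (hne_y p b)))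

lemma vanish_core (hlam : 0 < lam) (hM0 : 0 ≤ M) (hMx : ∀ k, |x k| ≤ M)
    (hRpos : ∀ k, 0 < R k) (hRlt : ∀ a b : Fin N, a < b → R a < R b)
    (hδ : 0 < δ) (hδR : ∀ b, M ≤ (1 - δ) * R b)
    (hS : (∑ k ∈ Finset.univ.filter (fun k => j ≤ k), n k) < 0)
    (y : Fin N → ℂ) (hy : ∀ k, Complex.abs (y k) = R k) :
    ∫ φ in (0:ℝ)..(2*Real.pi), FB N lam x n j (circleMap 0 1 φ) y = 0 := by
  classical
  set m : ℕ := (Finset.univ.filter (fun k => j ≤ k)).card with hm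
  set S : ℤ := ∑ k ∈ Finset.univ.filter (fun k => j ≤ k), n k with hSdef
  set cc : ℂ → Fin N → ℂ := fun t k => if j ≤ k then t else 1 with hccdef
  set h : ℂ → ℂ := fun t => t ^ ((m:ℤ) - 1) *
    ((∏ k, (cc t k * y k) ^ (n k - 1)) * kerA N lam x (fun k => cc t k * y k)) with hhdef
  -- basic facts
  have hy0 : ∀ k, y k ≠ 0 := by
    intro k hk
    have := hy k
    rw [hk] at this
    simp only [map_zero] at this
    exact absurd this.symm (ne_of_gt (hRpos k))
  have hcc_ne : ∀ (t : ℂ), 1 ≤ Complex.abs t → ∀ k, cc t k ≠ 0 := by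
    intro t ht k
    simp only [hccdef]
    split
    · intro h0; rw [h0] at ht; simp at ht; linarith
    · exact one_ne_zero
  have hcc_one_le : ∀ (t : ℂ), 1 ≤ Complex.abs t → ∀ k, 1 ≤ Complex.abs (cc t k) := by
    intro t ht k
    simp only [hccdef]
    split
    · exact ht
    · simp
  have hcc_mono : ∀ (t : ℂ), 1 ≤ Complex.abs t → ∀ a b : Fin N, a ≤ b →
      Complex.abs (cc t a) ≤ Complex.abs (cc t b) := by
    intro t ht a b hab
    simp only [hccdef]
    by_cases ha : j ≤ a
    · rw [if_pos ha, if_pos (ha.trans hab)]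
    · rw [if_neg ha]
      simp only [map_one]
      split
      · exact ht
      · simp
  have hu_lt : ∀ (t : ℂ), 1 ≤ Complex.abs t → ∀ a b : Fin N, a < b →
      Complex.abs ((cc t a * y a) / (cc t b * y b)) < 1 := by
    intro t ht a b hab
    rw [map_div₀, map_mul, map_mul, hy, hy]
    have hbpos : 0 < Complex.abs (cc t b) := lt_of_lt_of_le one_pos (hcc_one_le t ht b)
    rw [div_lt_one (mul_pos hbpos (hRpos b))]
    calc Complex.abs (cc t a) * R a ≤ Complex.abs (cc t b) * R a :=
          mul_le_mul_of_nonneg_right (hcc_mono t ht a b hab.le) (hRpos a).le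
      _ < Complex.abs (cc t b) * R b := by
          exact mul_lt_mul_of_pos_left (hRlt a b hab) hbpos
  have hw_le : ∀ (t : ℂ), 1 ≤ Complex.abs t → ∀ (a b : Fin N),
      Complex.abs ((x a : ℂ) / (cc t b * y b)) ≤ 1 - δ := by
    intro t ht a b
    rw [map_div₀, map_mul, hy, Complex.abs_ofReal]
    have hbpos : 0 < Complex.abs (cc t b) := lt_of_lt_of_le one_pos (hcc_one_le t ht b)
    have h1 : |x a| / (Complex.abs (cc t b) * R b) ≤ M / R b := by
      apply div_le_div₀ hM0 (hMx a) (hRpos b)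
      nlinarith [hcc_one_le t ht b, (hRpos b).le]
    refine h1.trans ?_
    rw [div_le_iff₀ (hRpos b)]
    exact hδR b
  have hδ1 : 1 - δ < 1 := by linarith
  have dcc : ∀ (t : ℂ) (k : Fin N), DifferentiableAt ℂ (fun s : ℂ => cc s k) t := by
    intro t k
    simp only [hccdef]
    split
    · exact differentiableAt_id
    · exact differentiableAt_const 1
  have hdiff : ∀ (t : ℂ), 1 ≤ Complex.abs t → DifferentiableAt ℂ h t := by
    intro t ht
    have ht0 : t ≠ 0 := by
      intro h0; rw [h0] at ht; simp only [map_zero] at ht; linarith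
    refine DifferentiableAt.mul (differentiableAt_zpow.mpr (Or.inl ht0)) ?_
    refine DifferentiableAt.mul ?_ ?_
    · refine DifferentiableAt.fun_finsetProd fun k _ => ?_
      exact ((dcc t k).mul_const (y k)).zpow
        (Or.inl (mul_ne_zero (hcc_ne t ht k) (hy0 k)))
    · simp only [kerA]
      refine DifferentiableAt.mul ?_ ?_
      · refine DifferentiableAt.fun_finsetProd fun a _ => ?_
        refine DifferentiableAt.fun_finsetProd fun b _ => ?_
        by_cases hab : a < b
        · simp only [if_pos hab]
          refine DifferentiableAt.cpow ?_ (differentiableAt_const _)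
            (Or.inl (re_pos_of_abs_lt_one (hu_lt t ht a b hab)))
          exact (differentiableAt_const 1).sub
            (DifferentiableAt.div ((dcc t a).mul_const (y a)) ((dcc t b).mul_const (y b))
              (mul_ne_zero (hcc_ne t ht b) (hy0 b)))
        · simp only [if_neg hab]
          exact differentiableAt_const 1
      · refine DifferentiableAt.fun_finsetProd fun a _ => ?_
        refine DifferentiableAt.fun_finsetProd fun b _ => ?_
        refine DifferentiableAt.cpow ?_ (differentiableAt_const _)
          (Or.inl (re_pos_of_abs_lt_one (lt_of_le_of_lt (hw_le t ht a b) hδ1)))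
        exact (differentiableAt_const 1).sub
          (DifferentiableAt.div (differentiableAt_const _) ((dcc t b).mul_const (y b))
            (mul_ne_zero (hcc_ne t ht b) (hy0 b)))
  -- bound
  set P : ℝ := ∏ k, R k ^ (n k - 1) with hPdef
  set B : ℝ := ((2:ℝ) ^ lam) ^ (N*N) * (δ ^ (-lam)) ^ (N*N) with hBdef
  set C : ℝ := P * B with hCdef
  have hPpos : 0 < P := Finset.prod_pos fun k _ => zpow_pos (hRpos k) _

  have h2pos : (0:ℝ) < (2:ℝ) ^ lam := Real.rpow_pos_of_pos two_pos lam
  have hδpos : (0:ℝ) < δ ^ (-lam) := Real.rpow_pos_of_pos hδ (-lam)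
  have hBpos : 0 < B := by positivity
  have hker : ∀ (t : ℂ), 1 ≤ Complex.abs t →
      Complex.abs (kerA N lam x (fun k => cc t k * y k)) ≤ B := by
    intro t ht
    rw [kerA, map_mul, hBdef]
    refine mul_le_mul ?_ ?_ (Complex.abs.nonneg _) (by positivity)
    · rw [map_prod]
      have step : ∀ a : Fin N, Complex.abs (∏ b,
          (if a < b then (1 - (cc t a * y a) / (cc t b * y b)) ^ (lam:ℂ) else 1))
            ≤ ((2:ℝ)^lam)^N := by
        intro a
        rw [map_prod]
        have hb : ∀ b : Fin N, b ∈ Finset.univ →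
            Complex.abs (if a < b then (1 - (cc t a * y a) / (cc t b * y b)) ^ (lam:ℂ) else 1)
              ≤ (2:ℝ)^lam := by
          intro b _
          by_cases hab : a < b
          · rw [if_pos hab, Complex.abs_cpow_real]
            refine Real.rpow_le_rpow (Complex.abs.nonneg _) ?_ hlam.le
            have h1 := norm_sub_le (1:ℂ) ((cc t a * y a) / (cc t b * y b))
            simp only [Complex.norm_eq_abs, map_one] at h1
            have h2 := hu_lt t ht a b hab
            linarith
          · rw [if_neg hab, map_one]
            exact Real.one_le_rpow one_le_two hlam.le
        calc ∏ b, Complex.abs (if a < b then (1 - (cc t a * y a) / (cc t b * y b)) ^ (lam:ℂ) else 1)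
            ≤ ∏ _b : Fin N, (2:ℝ)^lam :=
              Finset.prod_le_prod (fun b _ => Complex.abs.nonneg _) hb
          _ = ((2:ℝ)^lam)^N := by
              rw [Finset.prod_const, Finset.card_univ, Fintype.card_fin]
      calc ∏ a, Complex.abs (∏ b,
            (if a < b then (1 - (cc t a * y a) / (cc t b * y b)) ^ (lam:ℂ) else 1))
          ≤ ∏ _a : Fin N, ((2:ℝ)^lam)^N :=
            Finset.prod_le_prod (fun a _ => Complex.abs.nonneg _) (fun a _ => step a)
        _ = ((2:ℝ)^lam)^(N*N) := by
            rw [Finset.prod_const, Finset.card_univ, Fintype.card_fin, ← pow_mul]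
    · rw [map_prod]
      have step : ∀ a : Fin N, Complex.abs (∏ b,
          (1 - (x a : ℂ) / (cc t b * y b)) ^ (-(lam:ℂ))) ≤ (δ ^ (-lam))^N := by
        intro a
        rw [map_prod]
        have hb : ∀ b : Fin N, b ∈ Finset.univ →
            Complex.abs ((1 - (x a : ℂ) / (cc t b * y b)) ^ (-(lam:ℂ))) ≤ δ ^ (-lam) := by
          intro b _
          rw [show (-(lam:ℂ)) = ((-lam : ℝ) : ℂ) by push_cast; ring, Complex.abs_cpow_real]
          refine Real.rpow_le_rpow_of_nonpos hδ ?_ (neg_nonpos.mpr hlam.le)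
          have h1 := norm_sub_norm_le (1:ℂ) ((x a : ℂ) / (cc t b * y b))
          simp only [Complex.norm_eq_abs, map_one] at h1
          have h2 := hw_le t ht a b
          linarith
        calc ∏ b, Complex.abs ((1 - (x a : ℂ) / (cc t b * y b)) ^ (-(lam:ℂ)))
            ≤ ∏ _b : Fin N, δ ^ (-lam) :=
              Finset.prod_le_prod (fun b _ => Complex.abs.nonneg _) hb
          _ = (δ ^ (-lam))^N := by
              rw [Finset.prod_const, Finset.card_univ, Fintype.card_fin]
      calc ∏ a, Complex.abs (∏ b, (1 - (x a : ℂ) / (cc t b * y b)) ^ (-(lam:ℂ)))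
          ≤ ∏ _a : Fin N, (δ ^ (-lam))^N :=
            Finset.prod_le_prod (fun a _ => Complex.abs.nonneg _) (fun a _ => step a)
        _ = (δ ^ (-lam))^(N*N) := by
            rw [Finset.prod_const, Finset.card_univ, Fintype.card_fin, ← pow_mul]
  have hT : ((m:ℤ) - 1) + ∑ k ∈ Finset.univ.filter (fun k => j ≤ k), (n k - 1) = S - 1 := by
    rw [Finset.sum_sub_distrib, Finset.sum_const, ← hSdef, ← hm, nsmul_eq_mul, mul_one]
    ring
  have hPt : ∀ (t : ℂ), 1 ≤ Complex.abs t →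
      Complex.abs (∏ k, (cc t k * y k) ^ (n k - 1))
        = (Complex.abs t) ^ (∑ k ∈ Finset.univ.filter (fun k => j ≤ k), (n k - 1)) * P := by
    intro t ht
    have ht0 : Complex.abs t ≠ 0 := ne_of_gt (zero_lt_one.trans_le ht)
    rw [map_prod]
    have e1 : ∀ k : Fin N, Complex.abs ((cc t k * y k) ^ (n k - 1))
        = (if j ≤ k then Complex.abs t else 1) ^ (n k - 1) * R k ^ (n k - 1) := by
      intro k
      rw [map_zpow₀, map_mul, hy, mul_zpow]
      congr 2
      simp only [hccdef]
      split
      · rfl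
      · exact map_one Complex.abs
    rw [Finset.prod_congr rfl (fun k _ => e1 k), Finset.prod_mul_distrib]
    congr 1
    have e2 : ∀ k : Fin N, (if j ≤ k then Complex.abs t else 1) ^ (n k - 1)
        = if j ≤ k then (Complex.abs t) ^ (n k - 1) else 1 := by
      intro k
      split
      · rfl
      · exact one_zpow _
    rw [Finset.prod_congr rfl (fun k _ => e2 k), ← Finset.prod_filter,
      prod_zpow_sum _ _ ht0]
  have hbound : ∀ (t : ℂ), 1 ≤ Complex.abs t →
      Complex.abs (h t) ≤ C * (Complex.abs t) ^ (S - 1) := by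
    intro t ht
    have habs0 : (0:ℝ) < Complex.abs t := zero_lt_one.trans_le ht
    have ht0 : Complex.abs t ≠ 0 := ne_of_gt habs0
    have hz1 : (0:ℝ) < (Complex.abs t) ^ (S-1) := zpow_pos habs0 _
    have hK := hker t ht
    have hKnn : (0:ℝ) ≤ Complex.abs (kerA N lam x (fun k => cc t k * y k)) :=
      Complex.abs.nonneg _
    rw [hhdef]
    simp only []
    rw [map_mul, map_mul, map_zpow₀, hPt t ht]
    have e3 : Complex.abs t ^ ((m:ℤ)-1) *
        ((Complex.abs t) ^ (∑ k ∈ Finset.univ.filter (fun k => j ≤ k), (n k - 1)) * P *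
          Complex.abs (kerA N lam x (fun k => cc t k * y k)))
        = ((Complex.abs t) ^ (S-1) * P) *
            Complex.abs (kerA N lam x (fun k => cc t k * y k)) := by
      rw [← hT, zpow_add₀ ht0]
      ring
    rw [e3]
    calc ((Complex.abs t) ^ (S-1) * P) * Complex.abs (kerA N lam x (fun k => cc t k * y k))
        ≤ ((Complex.abs t) ^ (S-1) * P) * B :=
          mul_le_mul_of_nonneg_left hK (mul_pos hz1 hPpos).le
      _ = C * (Complex.abs t) ^ (S-1) := by rw [hCdef]; ring
  -- relate circle integral over unit circle to the target integral
  have hC1 : (∮ t in C(0,1), h t)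
      = Complex.I * ∫ φ in (0:ℝ)..(2*Real.pi), FB N lam x n j (circleMap 0 1 φ) y := by
    rw [← intervalIntegral.integral_const_mul]
    show (∫ φ in (0:ℝ)..(2*Real.pi), deriv (circleMap 0 1) φ • h (circleMap 0 1 φ)) = _
    refine intervalIntegral.integral_congr fun φ _ => ?_
    have ht1 : Complex.abs (circleMap 0 1 φ) = 1 := by
      rw [abs_circleMap_zero]; norm_num
    have ht0 : circleMap 0 1 φ ≠ 0 := by
      intro h0; rw [h0] at ht1; simp at ht1
    rw [deriv_circleMap, smul_eq_mul]
    set t := circleMap 0 1 φ with htdef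
    rw [hhdef]
    simp only [FB, hccdef]
    have hprod : (∏ k, (if j ≤ k then t else 1)) = t ^ m := by
      rw [← Finset.prod_filter, Finset.prod_const, ← hm]
    rw [hprod]
    have htt : t * t ^ ((m:ℤ) - 1) = t ^ (m:ℕ) := by
      rw [← zpow_one_add₀ ht0, ← zpow_natCast]
      congr 1
      push_cast
      ring
    rw [← htt]
    ring
  -- contour deformation
  have hdef2 : ∀ ρ : ℝ, 1 ≤ ρ → (∮ t in C(0,1), h t) = ∮ t in C(0,ρ), h t := by
    intro ρ hρ
    refine (circleIntegral_eq_of_differentiable_on_annulus_off_countable zero_lt_one hρ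
      Set.countable_empty ?_ ?_).symm
    · intro t hts
      have h2 : 1 ≤ Complex.abs t := by
        have h3 := hts.2
        simp only [Metric.mem_ball, Complex.dist_eq, sub_zero, not_lt] at h3
        exact h3
      exact (hdiff t h2).continuousAt.continuousWithinAt
    · intro t hts
      have h2 : 1 ≤ Complex.abs t := by
        have h3 := hts.1.2
        simp only [Metric.mem_closedBall, Complex.dist_eq, sub_zero, not_le] at h3
        exact h3.le
      exact hdiff t h2
  -- norm bound
  have hnorm : ∀ ρ : ℝ, 1 ≤ ρ →
      Complex.abs (∮ t in C(0,1), h t) ≤ 2 * Real.pi * C * ρ⁻¹ := by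
    intro ρ hρ
    have hρ0 : (0:ℝ) < ρ := zero_lt_one.trans_le hρ
    rw [hdef2 ρ hρ]
    have hb : ∀ z ∈ Metric.sphere (0:ℂ) ρ, ‖h z‖ ≤ C * ρ ^ (S - 1) := by
      intro z hz
      have hzabs : Complex.abs z = ρ := by
        simpa [Complex.dist_eq, Complex.abs_apply] using hz
      have h4 := hbound z (by rw [hzabs]; exact hρ)
      rw [hzabs] at h4
      rw [Complex.norm_eq_abs]
      exact h4
    have h1 := circleIntegral.norm_integral_le_of_norm_le_const hρ0.le hb
    rw [Complex.norm_eq_abs] at h1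
    refine h1.trans ?_
    have hzle : ρ ^ (S - 1) * ρ ≤ ρ⁻¹ := by
      have e1 : ρ ^ (S - 1) * ρ = ρ ^ S := by
        rw [show S = (S - 1) + 1 by ring, zpow_add₀ (ne_of_gt hρ0), zpow_one]
        ring_nf
      rw [e1, ← zpow_neg_one ρ]
      exact zpow_le_zpow_right₀ hρ (by omega)
    calc 2 * Real.pi * ρ * (C * ρ ^ (S - 1))
        = (2 * Real.pi * C) * (ρ ^ (S - 1) * ρ) := by ring
      _ ≤ (2 * Real.pi * C) * ρ⁻¹ := by
          refine mul_le_mul_of_nonneg_left hzle ?_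
          have hCpos : 0 < C := by rw [hCdef]; exact mul_pos hPpos hBpos
          nlinarith [Real.pi_pos, hCpos]
      _ = 2 * Real.pi * C * ρ⁻¹ := by ring
  -- conclude the circle integral vanishes
  have hV0 : (∮ t in C(0,1), h t) = 0 := by
    by_contra hne
    have hpos : 0 < Complex.abs (∮ t in C(0,1), h t) := Complex.abs.pos hne
    set V := Complex.abs (∮ t in C(0,1), h t) with hVdef
    set ρ := max 1 ((2 * Real.pi * C + 1) / V) with hρdef
    have hρ1 : (1:ℝ) ≤ ρ := le_max_left _ _
    have hρ0 : (0:ℝ) < ρ := zero_lt_one.trans_le hρ1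
    have h1 := hnorm ρ hρ1
    have h2 : (2 * Real.pi * C + 1) / V ≤ ρ := le_max_right _ _
    have h3 : 2 * Real.pi * C + 1 ≤ ρ * V := (div_le_iff₀ hpos).mp h2
    have h4 : 2 * Real.pi * C * ρ⁻¹ < V := by
      rw [← div_eq_mul_inv, div_lt_iff₀ hρ0]
      nlinarith
    linarith
  rw [hC1] at hV0
  rcases mul_eq_zero.mp hV0 with h1 | h1
  · exact absurd h1 Complex.I_ne_zero
  · exact h1

end Core

end Stmt4Aux

theorem stmt_4 (N : ℕ) (hN : 1 ≤ N) (lam : ℝ) (hlam : 0 < lam) (n : Fin N → ℤ)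
    (h : ∃ j : Fin N, (j : ℕ) < N - 1 ∧
      ∑ k ∈ Finset.univ.filter (fun k => j ≤ k), n k < 0) :
    ∀ ε : ℝ, 0 < ε → ∀ x : Fin N → ℝ, fval N lam n ε x = 0 := by
  classical
  obtain ⟨j, hj1, hS⟩ := h
  intro ε hε x
  set M : ℝ := ⨆ k, |x k| with hMdef
  set R : Fin N → ℝ := fun k => M + ε * (k.val + 1) with hRdef
  have hMx : ∀ k, |x k| ≤ M := by
    intro k
    rw [hMdef]
    exact le_ciSup (Set.Finite.bddAbove (Set.finite_range fun k => |x k|)) k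
  have hM0 : 0 ≤ M := le_trans (abs_nonneg _) (hMx ⟨0, hN⟩)
  have hRpos : ∀ k, 0 < R k := by
    intro k
    rw [hRdef]
    have h1 : (0:ℝ) < ε * (k.val + 1) := by positivity
    simp only []
    linarith
  have hRlt : ∀ a b : Fin N, a < b → R a < R b := by
    intro a b hab
    simp only [hRdef]
    have h1 : (a.val : ℝ) < (b.val : ℝ) := by exact_mod_cast hab
    nlinarith
  set δ : ℝ := ε / (M + ε) with hδdef
  have hMε : 0 < M + ε := by linarith
  have hδpos : 0 < δ := div_pos hε hMε
  have hδR : ∀ b : Fin N, M ≤ (1 - δ) * R b := by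
    intro b
    have h1 : 1 - δ = M / (M + ε) := by
      rw [hδdef]
      field_simp
      ring
    rw [h1, hRdef]
    simp only []
    rw [div_mul_eq_mul_div, le_div_iff₀ hMε]
    have hb0 : (0:ℝ) ≤ (b.val:ℝ) := Nat.cast_nonneg _
    nlinarith [mul_nonneg (mul_nonneg hM0 hε.le) hb0]
  have hfval : fval N lam n ε x
      = iterCircle N R (fun y => (∏ k, y k ^ (n k - 1)) * kerA N lam x y) := rfl
  have key : ∀ φ : ℝ, iterCircle N R (fun y => (∏ k, y k ^ (n k - 1)) * kerA N lam x y)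
      = iterCircle N R (fun y => Stmt4Aux.FB N lam x n j (circleMap 0 1 φ) y) := by
    intro φ
    have habs : ∀ k : Fin N,
        Complex.abs ((fun k => if j ≤ k then circleMap 0 1 φ else (1:ℂ)) k) = 1 := by
      intro k
      simp only []
      split
      · rw [abs_circleMap_zero]; norm_num
      · simp
    rw [Stmt4Aux.iterCircle_rot N R (fun k => if j ≤ k then circleMap 0 1 φ else 1) habs
      (fun y => (∏ k, y k ^ (n k - 1)) * kerA N lam x y), ← Stmt4Aux.iterCircle_const_mul]
    refine congrArg _ (funext fun y => ?_)
    simp only [Stmt4Aux.FB]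
  have hcont : Continuous fun p : ℝ × (Fin N → ℝ) =>
      Stmt4Aux.FB N lam x n j (circleMap 0 1 p.1) (fun k => circleMap 0 (R k) (p.2 k)) :=
    Stmt4Aux.cont_FB lam x n j R M δ hlam hM0 hMx hRpos hRlt hδpos hδR
  have hswap := Stmt4Aux.iterCircle_swap N R
    (fun φ y => Stmt4Aux.FB N lam x n j (circleMap 0 1 φ) y) hcont
  have hmain : (2*Real.pi) • fval N lam n ε x = 0 := by
    have hconst : ∫ _φ in (0:ℝ)..(2*Real.pi), fval N lam n ε x
        = (2*Real.pi) • fval N lam n ε x := by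
      rw [intervalIntegral.integral_const, sub_zero]
    rw [← hconst]
    have e1 : ∫ _φ in (0:ℝ)..(2*Real.pi), fval N lam n ε x
        = ∫ φ in (0:ℝ)..(2*Real.pi),
            iterCircle N R (fun y => Stmt4Aux.FB N lam x n j (circleMap 0 1 φ) y) := by
      refine intervalIntegral.integral_congr fun φ _ => ?_
      rw [hfval, key φ]
    rw [e1, hswap]
    have e2 : iterCircle N R
        (fun y => ∫ φ in (0:ℝ)..(2*Real.pi), Stmt4Aux.FB N lam x n j (circleMap 0 1 φ) y)
        = iterCircle N R (fun _ => 0) := by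
      refine Stmt4Aux.iterCircle_congr N R _ _ (fun k => (hRpos k).le) (fun y hy => ?_)
      exact Stmt4Aux.vanish_core lam x n j R M δ hlam hM0 hMx hRpos hRlt hδpos hδR hS y hy
    rw [e2, Stmt4Aux.iterCircle_zero]
  rcases smul_eq_zero.mp hmain with h1 | h1
  · exact absurd h1 (ne_of_gt Real.two_pi_pos)
  · exact h1
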